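/- Let (e₁, e₂) be pointwise orthonormal W^{1,2} (or smooth) maps from an open set Ω ⊆ ℝ² to ℝⁿ, and let ω = ⟨de₁, e₂⟩ be the connection 1-form. Then |∇e₁|² + |∇e₂|² = 2|ω|² + |∇(e₁∧e₂)|², where e₁∧e₂ : Ω → Λ²(ℝⁿ). -/

import Mathlib

open scoped RealInnerProductSpace

/-- The inner product on Λ²(ℝⁿ) of two simple wedges. -/
noncomputable def wedgeInner {n : ℕ} (v₁ v₂ w₁ w₂ : EuclideanSpace ℝ (Fin n)) : ℝ :=
  ⟪v₁, w₁⟫ * ⟪v₂, w₂⟫ - ⟪v₁, w₂⟫ * ⟪v₂, w₁⟫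

/-- The squared norm in Λ²(ℝⁿ) of `a∧b + c∧d`, expanded by bilinearity. -/
noncomputable def wedgeSumNormSq {n : ℕ} (a b c d : EuclideanSpace ℝ (Fin n)) : ℝ :=
  wedgeInner a b a b + 2 * wedgeInner a b c d + wedgeInner c d c d

/-!
Differentiating the constraints `⟪eᵢ, eⱼ⟫ = δᵢⱼ` gives `⟪∂e₁, e₁⟫ = 0` and
`⟪e₁, ∂e₂⟫ = -⟪∂e₁, e₂⟫ = -ω`. Hence in each direction the cross term `⟪∂e₁∧e₂, e₁∧∂e₂⟫`
vanishes, `|∂e₁∧e₂|² = |∂e₁|² - ω²` and `|e₁∧∂e₂|² = |∂e₂|² - ω²`.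
-/

open Filter Topology

section ConstantInner

variable {E F : Type*} [NormedAddCommGroup E] [InnerProductSpace ℝ E]
  [NormedAddCommGroup F] [NormedSpace ℝ F] {f g : F → E} {x : F} {c : ℝ}

theorem inner_fderiv_add_inner_fderiv_eq_zero (hf : DifferentiableAt ℝ f x)
    (hg : DifferentiableAt ℝ g x) (hc : (fun y => ⟪f y, g y⟫) =ᶠ[𝓝 x] fun _ => c) (v : F) :
    ⟪f x, fderiv ℝ g x v⟫ + ⟪fderiv ℝ f x v, g x⟫ = 0 := by
  have hzero : fderiv ℝ (fun y => ⟪f y, g y⟫) x = 0 := by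
    rw [hc.fderiv_eq, fderiv_const_apply]
  simpa [hzero] using (fderiv_inner_apply (𝕜 := ℝ) hf hg v).symm

theorem inner_fderiv_self_eq_zero (hf : DifferentiableAt ℝ f x)
    (hc : (fun y => ⟪f y, f y⟫) =ᶠ[𝓝 x] fun _ => c) (v : F) :
    ⟪fderiv ℝ f x v, f x⟫ = 0 := by
  have h := inner_fderiv_add_inner_fderiv_eq_zero hf hf hc v
  rw [real_inner_comm] at h
  linarith

end ConstantInner

theorem norm_sq_add_norm_sq_eq_wedgeSumNormSq {n : ℕ} {e₁ e₂ a d : EuclideanSpace ℝ (Fin n)}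
    (h₁₁ : ⟪e₁, e₁⟫ = 1) (h₂₂ : ⟪e₂, e₂⟫ = 1) (h₁₂ : ⟪e₁, e₂⟫ = 0)
    (ha : ⟪a, e₁⟫ = 0) (hd : ⟪e₁, d⟫ = -⟪a, e₂⟫) :
    ‖a‖ ^ 2 + ‖d‖ ^ 2 = 2 * ⟪a, e₂⟫ ^ 2 + wedgeSumNormSq a e₂ e₁ d := by
  simp only [wedgeSumNormSq, wedgeInner, ← real_inner_self_eq_norm_sq,
    real_inner_comm a e₂, real_inner_comm e₁ d, real_inner_comm e₁ e₂, h₁₁, h₂₂, h₁₂, ha, hd]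
  ring

/-- For a pointwise orthonormal pair `(e₁, e₂)` with connection 1-form `ω = ⟨de₁, e₂⟩`,
`|∇e₁|² + |∇e₂|² = 2|ω|² + |∇(e₁∧e₂)|²`, where
`∂ᵢ(e₁∧e₂) = ∂ᵢe₁ ∧ e₂ + e₁ ∧ ∂ᵢe₂` is measured in the Λ²(ℝⁿ) inner product. -/
theorem stmt_17 {n : ℕ} (Ω : Set (ℝ × ℝ)) (hΩ : IsOpen Ω)
    (e₁ e₂ : ℝ × ℝ → EuclideanSpace ℝ (Fin n))
    (he₁ : ∀ x ∈ Ω, DifferentiableAt ℝ e₁ x)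
    (he₂ : ∀ x ∈ Ω, DifferentiableAt ℝ e₂ x)
    (horth : ∀ x ∈ Ω, ⟪e₁ x, e₁ x⟫ = 1 ∧ ⟪e₂ x, e₂ x⟫ = 1 ∧ ⟪e₁ x, e₂ x⟫ = 0) :
    ∀ x ∈ Ω,
      (‖fderiv ℝ e₁ x (1, 0)‖ ^ 2 + ‖fderiv ℝ e₁ x (0, 1)‖ ^ 2)
          + (‖fderiv ℝ e₂ x (1, 0)‖ ^ 2 + ‖fderiv ℝ e₂ x (0, 1)‖ ^ 2)
        = 2 * (⟪fderiv ℝ e₁ x (1, 0), e₂ x⟫ ^ 2 + ⟪fderiv ℝ e₁ x (0, 1), e₂ x⟫ ^ 2)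
          + (wedgeSumNormSq (fderiv ℝ e₁ x (1, 0)) (e₂ x) (e₁ x) (fderiv ℝ e₂ x (1, 0))
              + wedgeSumNormSq (fderiv ℝ e₁ x (0, 1)) (e₂ x) (e₁ x) (fderiv ℝ e₂ x (0, 1))) := by
  intro x hx
  obtain ⟨h₁₁, h₂₂, h₁₂⟩ := horth x hx
  have near : ∀ᶠ y in 𝓝 x, y ∈ Ω := hΩ.mem_nhds hx
  have tangent (v : ℝ × ℝ) : ⟪fderiv ℝ e₁ x v, e₁ x⟫ = 0 :=
    inner_fderiv_self_eq_zero (he₁ x hx) (near.mono fun y hy => (horth y hy).1) v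
  have skew (v : ℝ × ℝ) : ⟪e₁ x, fderiv ℝ e₂ x v⟫ = -⟪fderiv ℝ e₁ x v, e₂ x⟫ := by
    have h := inner_fderiv_add_inner_fderiv_eq_zero (he₁ x hx) (he₂ x hx)
      (near.mono fun y hy => (horth y hy).2.2) v
    linarith
  have pointwise (v : ℝ × ℝ) :=
    norm_sq_add_norm_sq_eq_wedgeSumNormSq h₁₁ h₂₂ h₁₂ (tangent v) (skew v)
  linarith [pointwise (1, 0), pointwise (0, 1)]
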